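/- Let q be a prime power and n ≥ 2. Let a_m denote the number of ordered pairs of coprime monic polynomials over F_q, each of degree m with nonzero constant term. Then a_n = a_{n−1} + (q−1)^3 · q^{2n−3}. -/

import Mathlib

/-!
Every pair `(f, g) ∈ S_m × S_m` factors uniquely as `(d f', d g')` with `d = gcd f g ∈ S_k` and
`(f', g')` a coprime pair in `S_(m-k)`, so `|S_m|² = ∑_{k ≤ m} |S_k| a_(m-k)`. Since `|S_0| = 1`
and `|S_(k+1)| = (q-1) q^k`, the convolution for `m = n` minus `q` times the one for `m = n - 1`
telescopes to `a_n - a_(n-1) = |S_n|² - q |S_(n-1)|² = (q-1)³ q^(2n-3)`.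
-/

open Polynomial in
/-- `coprimePairs K m` is the number `a_m` of ordered pairs of coprime monic polynomials
over `K` of degree `m` with nonzero constant term. -/
noncomputable def coprimePairs (K : Type*) [Field K] (m : ℕ) : ℕ :=
  {p : Polynomial K × Polynomial K |
    p.1.Monic ∧ p.1.natDegree = m ∧ p.1.coeff 0 ≠ 0 ∧
    p.2.Monic ∧ p.2.natDegree = m ∧ p.2.coeff 0 ≠ 0 ∧
    IsCoprime p.1 p.2}.ncard

open Polynomial Finset

theorem recurrence_of_sq_eq_sum_mul {R : Type*} [CommRing R] (q : R) (a s : ℕ → R)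
    (hs₀ : s 0 = 1) (hs : ∀ k, s (k + 1) = (q - 1) * q ^ k)
    (h : ∀ m, s m ^ 2 = ∑ k ∈ range (m + 1), s k * a (m - k)) (m : ℕ) :
    a (m + 2) = a (m + 1) + (q - 1) ^ 3 * q ^ (2 * m + 1) := by
  have h₂ := h (m + 2)
  have h₁ := h (m + 1)
  rw [sum_range_succ', sum_range_succ'] at h₂
  rw [sum_range_succ'] at h₁
  have hshift : ∑ k ∈ range (m + 1), s (k + 1 + 1) * a (m + 2 - (k + 1 + 1)) =
      q * ∑ k ∈ range (m + 1), s (k + 1) * a (m + 1 - (k + 1)) := by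
    rw [mul_sum]
    refine sum_congr rfl fun k _ => ?_
    rw [hs, hs, Nat.add_sub_add_right, Nat.add_sub_add_right, pow_succ]
    ring
  rw [hshift] at h₂
  simp only [hs, hs₀, Nat.sub_zero, zero_add, pow_zero, mul_one, one_mul] at h₁ h₂
  rw [show m + 2 - 1 = m + 1 from rfl] at h₂
  linear_combination q * h₁ - h₂

namespace Polynomial

variable {K : Type*} [Field K] [DecidableEq K]

theorem monic_gcd {f g : K[X]} (h : gcd f g ≠ 0) : (gcd f g).Monic := by
  simpa only [_root_.normalize_gcd] using monic_normalize h

theorem gcd_mul_mul_of_isCoprime {d f g : K[X]} (hd : d.Monic) (hfg : IsCoprime f g) :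
    gcd (d * f) (d * g) = d := by
  have hunit : Associated (gcd f g) 1 :=
    associated_one_iff_isUnit.mpr ((gcd_isUnit_iff f g).mpr hfg)
  have hassoc : Associated (gcd (d * f) (d * g)) d :=
    (gcd_mul_left' d f g).trans (by simpa only [mul_one] using (Associated.refl d).mul_mul hunit)
  exact eq_of_monic_of_associated (monic_gcd (hassoc.ne_zero_iff.mpr hd.ne_zero)) hd hassoc

end Polynomial

section Field

variable {K : Type*} [Field K]

variable (K) in
def monicConstNeZero (m : ℕ) : Set K[X] := {p | p.Monic ∧ p.natDegree = m ∧ p.coeff 0 ≠ 0}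

variable (K) in
def coprimeMonicConstNeZero (m : ℕ) : Set (K[X] × K[X]) :=
  {p | p.1 ∈ monicConstNeZero K m ∧ p.2 ∈ monicConstNeZero K m ∧ IsCoprime p.1 p.2}

theorem coprimePairs_eq_card (m : ℕ) :
    coprimePairs K m = Nat.card (coprimeMonicConstNeZero K m) := by
  rw [coprimePairs, Nat.card_coe_set_eq]
  congr 1
  ext
  simp only [coprimeMonicConstNeZero, monicConstNeZero, Set.mem_ofPred_eq, and_assoc]

theorem monicConstNeZero_zero : monicConstNeZero K 0 = {1} := by
  ext p
  refine ⟨fun ⟨hp, hdeg, _⟩ => hp.natDegree_eq_zero.mp hdeg, ?_⟩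
  rintro rfl
  exact ⟨monic_one, natDegree_one, by simp⟩

theorem card_monicConstNeZero_zero : Nat.card (monicConstNeZero K 0) = 1 := by
  rw [monicConstNeZero_zero, Nat.card_unique]

/-- A monic polynomial of degree `k + 1` is `X ^ (k + 1)` plus its `k + 1` lower coefficients. -/
noncomputable def monicConstNeZeroEquiv (k : ℕ) :
    monicConstNeZero K (k + 1) ≃ {c : Fin (k + 1) → K // c 0 ≠ 0} :=
  let e := (monicEquivDegreeLT (R := K) (k + 1)).trans (degreeLTEquiv K (k + 1)).toEquiv
  (Equiv.subtypeEquivRight fun _ => and_assoc.symm).trans <|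
  (Equiv.subtypeSubtypeEquivSubtypeInter _ (fun p : K[X] => p.coeff 0 ≠ 0)).symm.trans <|
    e.subtypeEquiv fun p => by
      obtain ⟨p, -, hp⟩ := p
      change p.coeff 0 ≠ 0 ↔ p.eraseLead.coeff 0 ≠ 0
      rw [eraseLead_coeff_of_ne 0 (by omega)]

theorem card_monicConstNeZero_succ (k : ℕ) :
    Nat.card (monicConstNeZero K (k + 1)) = (Nat.card K - 1) * Nat.card K ^ k := by
  rw [Nat.card_congr ((monicConstNeZeroEquiv k).trans <|
      ((Fin.consEquiv fun _ => K).symm.subtypeEquiv fun _ => Iff.rfl).trans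
        (Equiv.prodSubtypeFstEquivSubtypeProd (p := fun x : K => x ≠ 0))), Nat.card_prod,
    ← Nat.card_congr unitsEquivNeZero, Nat.card_units, Nat.card_fun, Nat.card_fin]

theorem mul_mem_monicConstNeZero {d f : K[X]} {j k : ℕ} (hd : d ∈ monicConstNeZero K j)
    (hf : f ∈ monicConstNeZero K k) : d * f ∈ monicConstNeZero K (j + k) := by
  obtain ⟨hd, rfl, hd₀⟩ := hd
  obtain ⟨hf, rfl, hf₀⟩ := hf
  exact ⟨hd.mul hf, hd.natDegree_mul hf, by simpa [mul_coeff_zero] using ⟨hd₀, hf₀⟩⟩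

theorem mem_monicConstNeZero_of_mul {d f : K[X]} {m : ℕ} (hd : d.Monic)
    (hdf : d * f ∈ monicConstNeZero K m) :
    d ∈ monicConstNeZero K d.natDegree ∧ f ∈ monicConstNeZero K (m - d.natDegree) := by
  obtain ⟨hdf, rfl, hdf₀⟩ := hdf
  have hf := hd.of_mul_monic_left hdf
  rw [mul_coeff_zero, mul_ne_zero_iff] at hdf₀
  exact ⟨⟨hd, rfl, hdf₀.1⟩, ⟨hf, by rw [hd.natDegree_mul hf]; omega, hdf₀.2⟩⟩

noncomputable def mulByCommonFactor (m : ℕ) :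
    (Σ k : Fin (m + 1), monicConstNeZero K k × coprimeMonicConstNeZero K (m - k)) →
      monicConstNeZero K m × monicConstNeZero K m :=
  fun ⟨k, d, fg⟩ =>
    have hm : k + (m - k) = m := by omega
    (⟨d * fg.1.1, by simpa only [hm] using mul_mem_monicConstNeZero d.2 fg.2.1⟩,
      ⟨d * fg.1.2, by simpa only [hm] using mul_mem_monicConstNeZero d.2 fg.2.2.1⟩)

theorem mulByCommonFactor_injective (m : ℕ) :
    Function.Injective (mulByCommonFactor (K := K) m) := by
  classical
  rintro ⟨k, d, fg⟩ ⟨k', d', fg'⟩ h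
  simp only [mulByCommonFactor, Prod.mk.injEq, Subtype.mk.injEq] at h
  have hd : d.1 = d'.1 := by
    rw [← gcd_mul_mul_of_isCoprime d.2.1 fg.2.2.2, h.1, h.2,
      gcd_mul_mul_of_isCoprime d'.2.1 fg'.2.2.2]
  obtain rfl : k = k' := Fin.ext (by rw [← d.2.2.1, ← d'.2.2.1, hd])
  obtain rfl : d = d' := Subtype.ext hd
  obtain rfl : fg = fg' := Subtype.ext (Prod.ext (mul_left_cancel₀ d.2.1.ne_zero h.1)
    (mul_left_cancel₀ d.2.1.ne_zero h.2))
  rfl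

theorem mulByCommonFactor_surjective (m : ℕ) :
    Function.Surjective (mulByCommonFactor (K := K) m) := by
  classical
  rintro ⟨⟨f, hf⟩, ⟨g, hg⟩⟩
  have hd : (gcd f g).Monic := monic_gcd (gcd_ne_zero_of_left hf.1.ne_zero)
  obtain ⟨f', hf'⟩ := gcd_dvd_left f g
  obtain ⟨g', hg'⟩ := gcd_dvd_right f g
  have hcop : IsCoprime f' g' :=
    (gcd_isUnit_iff f' g').mp (isUnit_gcd_of_eq_mul_gcd hf' hg' hd.ne_zero)
  have hdm : (gcd f g).natDegree ≤ m :=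
    hf.2.1 ▸ natDegree_le_of_dvd (gcd_dvd_left f g) hf.1.ne_zero
  obtain ⟨hdS, hf'S⟩ := mem_monicConstNeZero_of_mul hd (hf' ▸ hf)
  obtain ⟨-, hg'S⟩ := mem_monicConstNeZero_of_mul hd (hg' ▸ hg)
  refine ⟨⟨⟨(gcd f g).natDegree, by omega⟩, ⟨gcd f g, hdS⟩, ⟨(f', g'), hf'S, hg'S, hcop⟩⟩, ?_⟩
  simp only [mulByCommonFactor, Prod.mk.injEq, Subtype.mk.injEq]
  exact ⟨hf'.symm, hg'.symm⟩

end Field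

section FiniteField

variable {K : Type*} [Field K] [Finite K]

instance (k : ℕ) : Finite (monicConstNeZero K k) := by
  cases k with
  | zero => rw [monicConstNeZero_zero]; infer_instance
  | succ k => exact Finite.of_equiv _ (monicConstNeZeroEquiv k).symm

instance (m : ℕ) : Finite (coprimeMonicConstNeZero K m) :=
  ((Set.toFinite (monicConstNeZero K m ×ˢ monicConstNeZero K m)).subset
    fun _ hp => ⟨hp.1, hp.2.1⟩).to_subtype

theorem card_monicConstNeZero_sq (m : ℕ) :
    Nat.card (monicConstNeZero K m) ^ 2 =
      ∑ k ∈ range (m + 1), Nat.card (monicConstNeZero K k) * coprimePairs K (m - k) := by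
  rw [sq, ← Nat.card_prod, ← Nat.card_eq_of_bijective _
    ⟨mulByCommonFactor_injective m, mulByCommonFactor_surjective m⟩, Nat.card_sigma,
    ← Fin.sum_univ_eq_sum_range]
  simp [Nat.card_prod, coprimePairs_eq_card]

end FiniteField

/-- For `n ≥ 2`, `a_n = a_(n-1) + (q-1)^3 · q^(2n-3)`. -/
theorem stmt_6 (K : Type*) [Field K] [Fintype K] (q n : ℕ) (hq : q = Fintype.card K)
    (hn : 2 ≤ n) :
    coprimePairs K n = coprimePairs K (n - 1) + (q - 1) ^ 3 * q ^ (2 * n - 3) := by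
  obtain ⟨m, rfl⟩ : ∃ m, n = m + 2 := ⟨n - 2, by omega⟩
  rw [← Nat.card_eq_fintype_card] at hq
  have hq₁ : 1 ≤ q := hq ▸ Nat.card_pos
  have key := recurrence_of_sq_eq_sum_mul (q : ℤ) (fun m => (coprimePairs K m : ℤ))
    (fun k => (Nat.card (monicConstNeZero K k) : ℤ))
    (by rw [card_monicConstNeZero_zero, Nat.cast_one])
    (fun k => by rw [card_monicConstNeZero_succ, ← hq]; push_cast [hq₁]; ring)
    (fun m => by exact_mod_cast card_monicConstNeZero_sq m) m
  rw [show m + 2 - 1 = m + 1 from rfl, show 2 * (m + 2) - 3 = 2 * m + 1 by omega]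
  exact_mod_cast key
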